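/- Let A : ℤ^n → ℤ^d be a linear map with (ker A) ∩ ℤ_{≥0}^n = 0, let I ⊆ ℂ[x_1,…,x_n] be a monomial A-graded ideal, T := T(I) = {a ∈ ℤ_{≥0}^n | x^a ∉ I}, and let ℓ ⊆ {1,…,n} be such that (0, ℓ) ∈ B(T). Then the map r ↦ A(r) mod A(ℤ^ℓ) induces a bijection from {r ∈ ℤ_{≥0}^n | (r, ℓ) ∈ B(T)} onto the quotient group A(ℤ^n)/A(ℤ^ℓ). -/

import Mathlib

open MvPolynomial

def vsupp {n : ℕ} (a : Fin n → ℕ) : Set (Fin n) := {i | a i ≠ 0}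

def vcell {n : ℕ} (l : Set (Fin n)) : Set (Fin n → ℕ) := {a | vsupp a ⊆ l}

def vslice {n : ℕ} (r : Fin n → ℕ) (l : Set (Fin n)) : Set (Fin n → ℕ) :=
  (fun a => r + a) '' vcell l

def IsStdPair {n : ℕ} (T : Set (Fin n → ℕ)) (r : Fin n → ℕ) (l : Set (Fin n)) : Prop :=
  Disjoint (vsupp r) l ∧ vslice r l ⊆ T ∧
    ∀ (r' : Fin n → ℕ) (l' : Set (Fin n)), Disjoint (vsupp r') l' → vslice r' l' ⊆ T →
      vslice r l ⊆ vslice r' l' → vslice r l = vslice r' l'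

def DownClosed {n : ℕ} (T : Set (Fin n → ℕ)) : Prop :=
  ∀ a b : Fin n → ℕ, (∀ i, b i ≤ a i) → a ∈ T → b ∈ T

def vtoZ {n : ℕ} (a : Fin n → ℕ) : Fin n → ℤ := fun i => (a i : ℤ)

def fiber {n : ℕ} (K : AddSubgroup (Fin n → ℤ)) (S : Set (Fin n → ℕ))
    (q : (Fin n → ℤ) ⧸ K) : Set (Fin n → ℕ) :=
  {a ∈ S | (QuotientAddGroup.mk (vtoZ a) : (Fin n → ℤ) ⧸ K) = q}

def PropII {n : ℕ} (K : AddSubgroup (Fin n → ℤ)) (T : Set (Fin n → ℕ)) : Prop :=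
  ∀ (g : Fin n → ℕ) (q : (Fin n → ℤ) ⧸ K),
    ((fun a => g + a) '' fiber K T q) ∩ T = ∅ ∨ ((fun a => g + a) '' fiber K T q) ⊆ T

noncomputable def xmono {n : ℕ} (a : Fin n → ℕ) : MvPolynomial (Fin n) ℂ :=
  monomial (Finsupp.equivFunOnFinite.symm a) 1

def TofI {n : ℕ} (I : Ideal (MvPolynomial (Fin n) ℂ)) : Set (Fin n → ℕ) :=
  {a | xmono a ∉ I}

def IsBinomialIdeal {n : ℕ} (I : Ideal (MvPolynomial (Fin n) ℂ)) : Prop :=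
  ∃ S : Set (MvPolynomial (Fin n) ℂ), I = Ideal.span S ∧
    ∀ f ∈ S, ∃ (a b : Fin n → ℕ) (la lb : ℂ), f = la • xmono a - lb • xmono b

def KofI {n : ℕ} (I : Ideal (MvPolynomial (Fin n) ℂ)) : AddSubgroup (Fin n → ℤ) :=
  AddSubgroup.closure {v | ∃ a ∈ TofI I, ∃ b ∈ TofI I,
    (∃ la lb : ℂ, la ≠ 0 ∧ lb ≠ 0 ∧ la • xmono a - lb • xmono b ∈ I) ∧ v = vtoZ a - vtoZ b}

def IsSaturated {n : ℕ} (I : Ideal (MvPolynomial (Fin n) ℂ)) : Prop :=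
  IsBinomialIdeal I ∧ ∀ a ∈ TofI I, ∀ b ∈ TofI I, vtoZ a - vtoZ b ∈ KofI I →
    ∃ la lb : ℂ, la ≠ 0 ∧ lb ≠ 0 ∧ la • xmono a - lb • xmono b ∈ I

def Tl {n : ℕ} (T : Set (Fin n → ℕ)) (l : Set (Fin n)) : Set (Fin n → ℕ) :=
  {a | ∃ r, IsStdPair T r l ∧ a ∈ vslice r l}

def Tlbar {n : ℕ} (T : Set (Fin n → ℕ)) (l : Set (Fin n)) : Set (Fin n → ℕ) :=
  {a | ∃ r r', (∀ i, r i ≤ r' i) ∧ IsStdPair T r' l ∧ a ∈ vslice r l}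

def IsMonomialIdeal {n : ℕ} (I : Ideal (MvPolynomial (Fin n) ℂ)) : Prop :=
  ∃ S : Set (Fin n → ℕ), I = Ideal.span (xmono '' S)

def wdeg {n d : ℕ} (M : Matrix (Fin d) (Fin n) ℤ) (m : Fin n →₀ ℕ) : Fin d → ℤ :=
  M.mulVec fun i => (m i : ℤ)

noncomputable def homogComp {n d : ℕ} (M : Matrix (Fin d) (Fin n) ℤ) (q : Fin d → ℤ)
    (f : MvPolynomial (Fin n) ℂ) : MvPolynomial (Fin n) ℂ :=
  ∑ m ∈ f.support, if wdeg M m = q then monomial m (f.coeff m) else 0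

noncomputable def degPart {n d : ℕ} (M : Matrix (Fin d) (Fin n) ℤ)
    (I : Ideal (MvPolynomial (Fin n) ℂ)) (q : Fin d → ℤ) :
    Submodule ℂ (MvPolynomial (Fin n) ℂ ⧸ I) :=
  Submodule.span ℂ ((Ideal.Quotient.mk I) '' {f | ∀ m ∈ f.support, wdeg M m = q})

def IsAGraded {n d : ℕ} (M : Matrix (Fin d) (Fin n) ℤ)
    (I : Ideal (MvPolynomial (Fin n) ℂ)) : Prop :=
  (∀ f ∈ I, ∀ q : Fin d → ℤ, homogComp M q f ∈ I) ∧
  ∀ q : Fin d → ℤ,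
    (q ∈ Set.range (fun a : Fin n → ℕ => M.mulVec (vtoZ a)) →
      Module.finrank ℂ (degPart M I q) = 1) ∧
    (q ∉ Set.range (fun a : Fin n → ℕ => M.mulVec (vtoZ a)) →
      Module.finrank ℂ (degPart M I q) = 0)

noncomputable def htI {R : Type*} [CommRing R] (P : Ideal R) : ℕ∞ :=
  ⨆ (h : P.IsPrime), Order.height (⟨P, h⟩ : PrimeSpectrum R)

/-- The subgroup A(ℤ^ℓ) ⊆ ℤ^d. -/
def AZl {n d : ℕ} (M : Matrix (Fin d) (Fin n) ℤ) (l : Set (Fin n)) :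
    AddSubgroup (Fin d → ℤ) :=
  AddSubgroup.closure {w | ∃ v : Fin n → ℤ, (∀ i ∉ l, v i = 0) ∧ w = M.mulVec v}

section Stmt13Aux

open Finsupp

variable {n d : ℕ}

/-- abbreviation for the grading map on exponent vectors -/
def Am (M : Matrix (Fin d) (Fin n) ℤ) (a : Fin n → ℕ) : Fin d → ℤ := M.mulVec (vtoZ a)

lemma vtoZ_add (a b : Fin n → ℕ) : vtoZ (a + b) = vtoZ a + vtoZ b := by
  funext i; simp [vtoZ]

lemma Am_add (M : Matrix (Fin d) (Fin n) ℤ) (a b : Fin n → ℕ) :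
    Am M (a + b) = Am M a + Am M b := by
  unfold Am; rw [vtoZ_add, Matrix.mulVec_add]

lemma symm_funadd (a b : Fin n → ℕ) :
    Finsupp.equivFunOnFinite.symm (a + b) =
      Finsupp.equivFunOnFinite.symm a + Finsupp.equivFunOnFinite.symm b := by
  ext i; simp

lemma xmono_mul (a b : Fin n → ℕ) : xmono a * xmono b = xmono (a + b) := by
  unfold xmono
  rw [MvPolynomial.monomial_mul, symm_funadd, one_mul]

lemma T_down {I : Ideal (MvPolynomial (Fin n) ℂ)} {a b : Fin n → ℕ}
    (ha : a ∈ TofI I) (h : ∀ i, b i ≤ a i) : b ∈ TofI I := by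
  intro hb
  apply ha
  have : a = (a - b) + b := by funext i; have := h i; simp; omega
  rw [this, ← xmono_mul]
  exact Ideal.mul_mem_left _ _ hb

open Pointwise in
lemma span_mono_div {S : Set (Fin n → ℕ)} {f : MvPolynomial (Fin n) ℂ}
    (hf : f ∈ Ideal.span (xmono '' S)) :
    ∀ m' ∈ f.support, ∃ s ∈ S, Finsupp.equivFunOnFinite.symm s ≤ m' := by
  classical
  induction hf using Submodule.span_induction with
    | mem x hx =>
      obtain ⟨s, hs, rfl⟩ := hx
      intro m' hm'
      have : m' = Finsupp.equivFunOnFinite.symm s := by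
        have := MvPolynomial.support_monomial (s := Finsupp.equivFunOnFinite.symm s)
          (a := (1:ℂ))
        rw [xmono] at hm'
        simp [this] at hm'
        exact hm'
      exact ⟨s, hs, le_of_eq this.symm⟩
    | zero => intro m' hm'; simp at hm'
    | add x y hx hy ihx ihy =>
      intro m' hm'
      have := MvPolynomial.support_add hm'
      rcases Finset.mem_union.mp this with h | h
      · exact ihx m' h
      · exact ihy m' h
    | smul a x hx ih =>
      intro m' hm'
      have hmul : (a • x).support ⊆ a.support + x.support := by
        have : a • x = a * x := rfl
        rw [this]; exact MvPolynomial.support_mul a x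
      obtain ⟨m1, hm1, m2, hm2, heq⟩ := Finset.mem_add.mp (hmul hm')
      obtain ⟨s, hs, hle⟩ := ih m2 hm2
      subst heq
      exact ⟨s, hs, le_trans hle (le_add_self)⟩

lemma mono_mem_of_mem {S : Set (Fin n → ℕ)} {f : MvPolynomial (Fin n) ℂ}
    (hf : f ∈ Ideal.span (xmono '' S)) {m : Fin n →₀ ℕ} (hm : m ∈ f.support) (c : ℂ) :
    MvPolynomial.monomial m c ∈ Ideal.span (xmono '' S) := by
  obtain ⟨s, hs, hle⟩ := span_mono_div hf m hm
  have hx : xmono s ∈ Ideal.span (xmono '' S) :=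
    Ideal.subset_span ⟨s, hs, rfl⟩
  have : MvPolynomial.monomial m c =
      MvPolynomial.monomial (m - Finsupp.equivFunOnFinite.symm s) c * xmono s := by
    rw [xmono, MvPolynomial.monomial_mul, mul_one, tsub_add_cancel_of_le hle]
  rw [this]
  exact Ideal.mul_mem_left _ _ hx

lemma mono_mem_of_mem' {I : Ideal (MvPolynomial (Fin n) ℂ)} (hmon : IsMonomialIdeal I)
    {f : MvPolynomial (Fin n) ℂ} (hf : f ∈ I) {m : Fin n →₀ ℕ} (hm : m ∈ f.support) (c : ℂ) :
    MvPolynomial.monomial m c ∈ I := by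
  obtain ⟨S, rfl⟩ := hmon
  exact mono_mem_of_mem hf hm c

lemma wdeg_symm (M : Matrix (Fin d) (Fin n) ℤ) (a : Fin n → ℕ) :
    wdeg M (Finsupp.equivFunOnFinite.symm a) = Am M a := rfl

lemma wdeg_coe (M : Matrix (Fin d) (Fin n) ℤ) (m : Fin n →₀ ℕ) :
    wdeg M m = Am M (⇑m) := rfl

/-- Existence of a standard monomial in every attained degree. -/
lemma T_exists {M : Matrix (Fin d) (Fin n) ℤ} {I : Ideal (MvPolynomial (Fin n) ℂ)}
    (hI : IsAGraded M I) (a : Fin n → ℕ) : ∃ t ∈ TofI I, Am M t = Am M a := by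
  by_contra hcon
  push_neg at hcon
  have hall : ∀ t : Fin n → ℕ, Am M t = Am M a → xmono t ∈ I := by
    intro t ht
    by_contra hxt
    exact hcon t hxt ht
  have hq : Am M a ∈ Set.range (fun b : Fin n → ℕ => M.mulVec (vtoZ b)) := ⟨a, rfl⟩
  have h1 := (hI.2 (Am M a)).1 hq
  have hbot : degPart M I (Am M a) = ⊥ := by
    rw [degPart, ← Submodule.span_empty (R := ℂ)]
    apply le_antisymm
    · apply Submodule.span_le.mpr
      rintro x ⟨f, hf, rfl⟩
      have hfI : f ∈ I := by
        have : f = ∑ m ∈ f.support, MvPolynomial.monomial m (f.coeff m) :=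
          (MvPolynomial.support_sum_monomial_coeff f).symm
        rw [this]
        apply Submodule.sum_mem
        intro m hm
        have hdeg : Am M (⇑m) = Am M a := by rw [← wdeg_coe]; exact hf m hm
        have := hall (⇑m) hdeg
        have hx : xmono (⇑m) = MvPolynomial.monomial m 1 := by
          rw [xmono, Finsupp.equivFunOnFinite_symm_coe]
        have : MvPolynomial.monomial m 1 ∈ I := by rw [← hx]; exact this
        have h2 : MvPolynomial.monomial m (f.coeff m) =
            MvPolynomial.C (f.coeff m) * MvPolynomial.monomial m (1:ℂ) := by
          rw [MvPolynomial.C_mul_monomial, mul_one]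
        rw [h2]
        exact Ideal.mul_mem_left _ _ this
      have : Ideal.Quotient.mk I f = 0 := Ideal.Quotient.eq_zero_iff_mem.mpr hfI
      rw [this]
      simp [Submodule.zero_mem]
    · apply Submodule.span_mono
      simp
  rw [hbot] at h1
  simp at h1

set_option synthInstance.maxHeartbeats 1000000 in
/-- Uniqueness of the standard monomial in each degree. -/
lemma T_unique {M : Matrix (Fin d) (Fin n) ℤ} {I : Ideal (MvPolynomial (Fin n) ℂ)}
    (hmon : IsMonomialIdeal I) (hI : IsAGraded M I) {a b : Fin n → ℕ}
    (ha : a ∈ TofI I) (hb : b ∈ TofI I) (hab : Am M a = Am M b) : a = b := by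
  classical
  by_contra hne
  set q := Am M a with hqdef
  have hq : q ∈ Set.range (fun c : Fin n → ℕ => M.mulVec (vtoZ c)) := ⟨a, rfl⟩
  have h1 := (hI.2 q).1 hq
  have hmema : xmono a ∈ {f : MvPolynomial (Fin n) ℂ | ∀ m ∈ f.support, wdeg M m = q} := by
    intro m hm
    rw [xmono, MvPolynomial.support_monomial] at hm
    simp at hm
    rw [hm, wdeg_symm]
  have hmemb : xmono b ∈ {f : MvPolynomial (Fin n) ℂ | ∀ m ∈ f.support, wdeg M m = q} := by
    intro m hm
    rw [xmono, MvPolynomial.support_monomial] at hm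
    simp at hm
    rw [hm, wdeg_symm]
    exact hab.symm
  have hva : Ideal.Quotient.mk I (xmono a) ∈ degPart M I q :=
    Submodule.subset_span ⟨xmono a, hmema, rfl⟩
  have hvb : Ideal.Quotient.mk I (xmono b) ∈ degPart M I q :=
    Submodule.subset_span ⟨xmono b, hmemb, rfl⟩
  have hsne : Finsupp.equivFunOnFinite.symm a ≠ Finsupp.equivFunOnFinite.symm b := by
    intro h
    exact hne (Finsupp.equivFunOnFinite.symm.injective h)
  -- linear independence of the two standard monomials in the quotient
  have hli : LinearIndependent ℂ
      ![(⟨Ideal.Quotient.mk I (xmono b), hvb⟩ : degPart M I q),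
        (⟨Ideal.Quotient.mk I (xmono a), hva⟩ : degPart M I q)] := by
    rw [linearIndependent_fin2]
    constructor
    · simp only [Matrix.cons_val_one, Matrix.head_cons, ne_eq]
      intro h
      have : Ideal.Quotient.mk I (xmono a) = 0 := by
        have := congrArg (Subtype.val) h
        simpa using this
      exact ha (Ideal.Quotient.eq_zero_iff_mem.mp this)
    · intro s h
      have hsub : s • Ideal.Quotient.mk I (xmono a) = Ideal.Quotient.mk I (xmono b) := by
        have := congrArg (Subtype.val) h
        simpa using this
      have hsmul : s • Ideal.Quotient.mk I (xmono a) =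
          Ideal.Quotient.mk I (s • xmono a) := by
        rw [← Ideal.Quotient.mkₐ_eq_mk ℂ I, ← map_smul]
      rw [hsmul] at hsub
      have hmem : s • xmono a - xmono b ∈ I := by
        have := Ideal.Quotient.eq.mp hsub
        exact this
      have hcoeff : (s • xmono a - xmono b).coeff (Finsupp.equivFunOnFinite.symm b) = -1 := by
        rw [xmono, xmono, MvPolynomial.smul_monomial]
        simp [MvPolynomial.coeff_monomial, hsne.symm, hsne]
      have hsupp : Finsupp.equivFunOnFinite.symm b ∈ (s • xmono a - xmono b).support := by
        rw [MvPolynomial.mem_support_iff, hcoeff]; norm_num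
      have := mono_mem_of_mem' hmon hmem hsupp 1
      apply hb
      rw [xmono]
      exact this
  have hrank := hli.cardinal_le_rank
  have hr1 : Module.rank ℂ (degPart M I q) = 1 := by
    have : Cardinal.toNat (Module.rank ℂ (degPart M I q)) = 1 := h1
    exact Cardinal.toNat_eq_one.mp this
  rw [hr1, Cardinal.mk_fintype] at hrank
  norm_num at hrank

/-! ### Combinatorial part -/

def cellm (l : Set (Fin n)) (c : Fin n → ℕ) : Prop := ∀ i ∉ l, c i = 0

lemma mem_vslice {r : Fin n → ℕ} {l : Set (Fin n)} {a : Fin n → ℕ} :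
    a ∈ vslice r l ↔ ∃ c, cellm l c ∧ a = r + c := by
  constructor
  · rintro ⟨c, hc, rfl⟩
    refine ⟨c, fun i hi => ?_, rfl⟩
    by_contra h
    exact hi (hc h)
  · rintro ⟨c, hc, rfl⟩
    refine ⟨c, fun i hi => ?_, rfl⟩
    by_contra h
    exact hi (hc i h)

lemma vslice_self (r : Fin n → ℕ) (l : Set (Fin n)) : r ∈ vslice r l :=
  mem_vslice.mpr ⟨0, fun i _ => rfl, by simp⟩

lemma disj_iff {r : Fin n → ℕ} {l : Set (Fin n)} :
    Disjoint (vsupp r) l ↔ ∀ i ∈ l, r i = 0 := by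
  rw [Set.disjoint_left]
  constructor
  · intro h i hi
    by_contra hne
    exact h hne hi
  · intro h i hi hil
    exact hi (h i hil)

lemma T_mem_of_cell {I : Ideal (MvPolynomial (Fin n) ℂ)} {l : Set (Fin n)}
    (hl : IsStdPair (TofI I) 0 l) {c : Fin n → ℕ} (hc : cellm l c) : c ∈ TofI I := by
  have := hl.2.1 (mem_vslice.mpr ⟨c, hc, (zero_add c).symm⟩)
  simpa using this

lemma not_cell_subset {I : Ideal (MvPolynomial (Fin n) ℂ)} {l : Set (Fin n)}
    (hl : IsStdPair (TofI I) 0 l) {j : Fin n} (hj : j ∉ l) :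
    ¬ (vslice 0 (l ∪ {j}) ⊆ TofI I) := by
  classical
  intro hsub
  have hmono : vslice 0 l ⊆ vslice 0 (l ∪ {j}) := by
    intro x hx
    obtain ⟨c, hc, rfl⟩ := mem_vslice.mp hx
    exact mem_vslice.mpr ⟨c, fun i hi => hc i (fun h => hi (Or.inl h)), rfl⟩
  have heq := hl.2.2 0 (l ∪ {j})
    (by rw [disj_iff]; intro i _; rfl) hsub hmono
  have h1 : (fun i => if i = j then 1 else 0 : Fin n → ℕ) ∈ vslice 0 (l ∪ {j}) := by
    refine mem_vslice.mpr ⟨_, fun i hi => ?_, (zero_add _).symm⟩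
    have : i ≠ j := fun h => hi (Or.inr h)
    simp [this]
  rw [← heq] at h1
  obtain ⟨c, hc, hce⟩ := mem_vslice.mp h1
  have h2 := congrFun hce j
  simp [hc j hj] at h2

lemma std_iff {I : Ideal (MvPolynomial (Fin n) ℂ)} {l : Set (Fin n)}
    (hl : IsStdPair (TofI I) 0 l) (r : Fin n → ℕ) :
    IsStdPair (TofI I) r l ↔
      ((∀ i ∈ l, r i = 0) ∧ ∀ c, cellm l c → r + c ∈ TofI I) := by
  classical
  constructor
  · intro h
    exact ⟨disj_iff.mp h.1, fun c hc => h.2.1 (mem_vslice.mpr ⟨c, hc, rfl⟩)⟩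
  · rintro ⟨h1, h2⟩
    refine ⟨disj_iff.mpr h1, ?_, ?_⟩
    · intro x hx
      obtain ⟨c, hc, rfl⟩ := mem_vslice.mp hx
      exact h2 c hc
    · intro r' l' hd' hT' hss
      have hd'' : ∀ i ∈ l', r' i = 0 := disj_iff.mp hd'
      have hll : l ⊆ l' := by
        intro j hj
        by_contra hj'
        have hk : ∀ k : ℕ, ∃ c', cellm l' c' ∧
            r + (fun i => if i = j then k else 0) = r' + c' := by
          intro k
          refine mem_vslice.mp (hss (mem_vslice.mpr ⟨_, fun i hi => ?_, rfl⟩))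
          have : i ≠ j := fun h => hi (h ▸ hj)
          simp [this]
        obtain ⟨c0, hc0, he0⟩ := hk 0
        obtain ⟨c1, hc1, he1⟩ := hk (r' j + 1)
        have e0 := congrFun he0 j
        have e1 := congrFun he1 j
        simp [hc0 j hj', hc1 j hj'] at e0 e1
        omega
      by_cases hl'l : l' ⊆ l
      · have hll' : l' = l := le_antisymm hl'l hll
        subst hll'
        obtain ⟨c0, hc0, he0⟩ := mem_vslice.mp (hss (vslice_self r l'))
        have hr : r = r' := by
          funext i
          have hi := congrFun he0 i
          simp only [Pi.add_apply] at hi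
          by_cases h : i ∈ l'
          · rw [h1 i h, hd'' i h]
          · rw [hc0 i h] at hi
            omega
        rw [hr]
      · obtain ⟨j, hjl', hjl⟩ := Set.not_subset.mp hl'l
        exfalso
        apply not_cell_subset hl hjl
        intro x hx
        obtain ⟨c, hc, rfl⟩ := mem_vslice.mp hx
        obtain ⟨c0, hc0, he0⟩ := mem_vslice.mp (hss (vslice_self r l))
        have hrc : r + c ∈ vslice r' l' := by
          rw [he0, add_assoc]
          refine mem_vslice.mpr ⟨c0 + c, fun i hi => ?_, rfl⟩
          have h1' : c0 i = 0 := hc0 i hi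
          have h2' : c i = 0 := by
            apply hc
            intro hmem
            rcases hmem with h | h
            · exact hi (hll h)
            · simp at h; exact hi (h ▸ hjl')
          simp [h1', h2']
        have hmem : r + c ∈ TofI I := hT' hrc
        refine T_down hmem (fun i => ?_)
        simp

/-- The set of roots of standard pairs with face `l` is finite. -/
lemma Tl_finite {I : Ideal (MvPolynomial (Fin n) ℂ)} {l : Set (Fin n)}
    (hl : IsStdPair (TofI I) 0 l) :
    {r : Fin n → ℕ | (∀ i ∈ l, r i = 0) ∧ ∀ c, cellm l c → r + c ∈ TofI I}.Finite := by
  classical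
  have hz : ∀ j, j ∉ l → ∃ z : Fin n → ℕ,
      (∀ i, i ∉ l → i ≠ j → z i = 0) ∧ z ∉ TofI I := by
    intro j hj
    obtain ⟨x, hx, hxT⟩ := Set.not_subset.mp (not_cell_subset hl hj)
    obtain ⟨c, hc, rfl⟩ := mem_vslice.mp hx
    refine ⟨0 + c, fun i hi hij => ?_, hxT⟩
    have : c i = 0 := by
      apply hc
      intro hmem
      rcases hmem with h | h
      · exact hi h
      · simp at h; exact hij h
    simp [this]
  set B : Fin n → ℕ := fun j => if h : j ∈ l then 1 else (hz j h).choose j + 1 with hB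
  apply Set.Finite.subset (Set.Finite.pi (fun i => Set.finite_Iio (B i)))
  intro s hs
  rw [Set.mem_pi]
  intro i _
  by_cases hi : i ∈ l
  · simp only [Set.mem_Iio, hB, dif_pos hi]
    rw [hs.1 i hi]
    norm_num
  · simp only [Set.mem_Iio, hB, dif_neg hi]
    by_contra hcon
    push_neg at hcon
    obtain ⟨hz1, hz2⟩ := (hz i hi).choose_spec
    apply hz2
    set zz := (hz i hi).choose with hzz
    set zc : Fin n → ℕ := fun k => if k ∈ l then zz k else 0 with hzc
    have h1 : s + zc ∈ TofI I := hs.2 zc (fun k hk => by simp [hzc, hk])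
    refine T_down h1 (fun k => ?_)
    simp only [Pi.add_apply, hzc]
    by_cases hkl : k ∈ l
    · simp only [if_pos hkl]
      omega
    · simp only [if_neg hkl]
      by_cases hki : k = i
      · subst hki
        omega
      · rw [hz1 k hkl hki]
        exact Nat.zero_le _

/-- Stabilization step: comparable standard monomials in degrees differing by a cell
vector differ exactly by that cell vector. -/
lemma step {M : Matrix (Fin d) (Fin n) ℤ} {T : Set (Fin n → ℕ)} {l : Set (Fin n)}
    (hdown : ∀ {a b : Fin n → ℕ}, a ∈ T → (∀ i, b i ≤ a i) → b ∈ T)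
    (huniq : ∀ {a b : Fin n → ℕ}, a ∈ T → b ∈ T → Am M a = Am M b → a = b)
    (hcell : ∀ c, cellm l c → c ∈ T)
    {t t' W : Fin n → ℕ} (hW : cellm l W)
    (ht' : t' ∈ T) (hle : ∀ i, t i ≤ t' i)
    (hdeg : Am M t' = Am M (t + W)) : t' = t + W := by
  classical
  set U : Fin n → ℕ := fun i => t' i - t i with hU
  have htU : t + U = t' := by
    funext i
    have := hle i
    simp only [Pi.add_apply, hU]
    omega
  have hAmU : Am M U = Am M W := by
    have h1 : Am M t + Am M U = Am M t + Am M W := by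
      rw [← Am_add, ← Am_add, htU]
      exact hdeg
    exact add_left_cancel h1
  set UE : Fin n → ℕ := fun i => if i ∈ l then 0 else U i with hUE
  set Ul : Fin n → ℕ := fun i => if i ∈ l then U i else 0 with hUl
  set mu : Fin n → ℕ := fun i => min (Ul i) (W i) with hmu
  set Vm : Fin n → ℕ := fun i => Ul i - mu i with hVm
  set Vp : Fin n → ℕ := fun i => W i - mu i with hVp
  have hUsplit : (UE + Vm) + mu = U := by
    funext i
    simp only [Pi.add_apply, hUE, hUl, hmu, hVm]
    by_cases h : i ∈ l <;> simp [h] <;> omega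
  have hWsplit : Vp + mu = W := by
    funext i
    simp only [Pi.add_apply, hVp, hmu]
    omega
  have hAmeq : Am M (UE + Vm) = Am M Vp := by
    have h1 : Am M (UE + Vm) + Am M mu = Am M Vp + Am M mu := by
      rw [← Am_add, ← Am_add, hUsplit, hWsplit, hAmU]
    exact add_right_cancel h1
  have hmem1 : UE + Vm ∈ T := by
    refine hdown ht' (fun i => ?_)
    have := hle i
    simp only [Pi.add_apply, hUE, hVm, hUl, hmu, hU]
    by_cases h : i ∈ l <;> simp [h] <;> omega
  have hmem2 : Vp ∈ T := by
    refine hcell Vp (fun i hi => ?_)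
    simp only [hVp, hmu, hUl]
    rw [hW i hi]
    simp
  have hkey := huniq hmem1 hmem2 hAmeq
  funext i
  have hki := congrFun hkey i
  simp only [Pi.add_apply, hUE, hVm, hVp, hmu, hUl] at hki
  have hWi := fun (hi : i ∉ l) => hW i hi
  simp only [Pi.add_apply]
  by_cases h : i ∈ l
  · simp only [if_pos h] at hki
    have h1 : min (U i) (W i) = U i ∨ min (U i) (W i) = W i := min_choice _ _
    have h2 : min (U i) (W i) ≤ U i := min_le_left _ _
    have h3 : min (U i) (W i) ≤ W i := min_le_right _ _
    have h4 := hle i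
    simp only [hU] at hki h1 h2 h3 ⊢
    omega
  · have hWi0 : W i = 0 := hW i h
    simp only [if_neg h, hWi0] at hki
    rw [hWi0]
    have h4 := hle i
    simp only [hU] at hki ⊢
    omega

/-- Every class `[A a]`, `a ∈ ℕⁿ`, is represented by an element of `T_ℓ`. -/
lemma classP {M : Matrix (Fin d) (Fin n) ℤ} {T : Set (Fin n → ℕ)} {l : Set (Fin n)}
    (hdown : ∀ {a b : Fin n → ℕ}, a ∈ T → (∀ i, b i ≤ a i) → b ∈ T)
    (huniq : ∀ {a b : Fin n → ℕ}, a ∈ T → b ∈ T → Am M a = Am M b → a = b)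
    (hexists : ∀ a : Fin n → ℕ, ∃ t ∈ T, Am M t = Am M a)
    (hcell : ∀ c, cellm l c → c ∈ T) (a : Fin n → ℕ) :
    ∃ s, ((∀ i ∈ l, s i = 0) ∧ ∀ c, cellm l c → s + c ∈ T) ∧
      ∃ c c', cellm l c ∧ cellm l c' ∧ Am M (s + c') = Am M (a + c) := by
  classical
  set ind : Fin n → ℕ := fun i => if i ∈ l then 1 else 0 with hind
  choose t ht hdeg using fun k : ℕ => hexists (a + k • ind)
  have hpwo : (Set.univ : Set (Fin n → ℕ)).IsPWO :=
    Set.isPWO_of_wellQuasiOrderedLE _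
  obtain ⟨g, hg⟩ := hpwo.exists_monotone_subseq (f := t) (fun k => Set.mem_univ _)
  set s0 := t (g 0) with hs0
  have hstab : ∀ c, cellm l c → s0 + c ∈ T := by
    intro c hc
    set C : ℕ := ∑ i, c i with hC
    have hci : ∀ i, c i ≤ C := fun i =>
      Finset.single_le_sum (fun j _ => Nat.zero_le _) (Finset.mem_univ i)
    set k' : ℕ := C + g 0 with hk'
    have hgk : g 0 ≤ g k' := g.monotone (Nat.le_add_left _ _)
    have hkk : k' ≤ g k' := g.strictMono.le_apply
    set Δ : ℕ := g k' - g 0 with hΔ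
    have hΔC : C ≤ Δ := by omega
    have hlek : ∀ i, t (g 0) i ≤ t (g k') i := fun i => hg (Nat.zero_le k') i
    have hdegW : Am M (t (g k')) = Am M (t (g 0) + Δ • ind) := by
      have hfun : a + (g k') • ind = (a + (g 0) • ind) + Δ • ind := by
        funext i
        simp only [Pi.add_apply, Pi.smul_apply, smul_eq_mul, hind]
        by_cases h : i ∈ l <;> simp [h] <;> omega
      rw [hdeg (g k'), hfun, Am_add, ← hdeg (g 0), ← Am_add]
    have hWc : cellm l (Δ • ind) := by
      intro i hi
      simp [hind, hi]
    have hstep := step (M := M) hdown huniq hcell hWc (ht (g k')) hlek hdegW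
    refine hdown (ht (g k')) (fun i => ?_)
    rw [hstep]
    simp only [Pi.add_apply, Pi.smul_apply, smul_eq_mul, hind, hs0]
    by_cases h : i ∈ l
    · simp only [if_pos h]
      have := hci i
      omega
    · rw [hc i h]
      simp
  set s : Fin n → ℕ := fun i => if i ∈ l then 0 else s0 i with hs
  set sl : Fin n → ℕ := fun i => if i ∈ l then s0 i else 0 with hsl
  have hssl : s + sl = s0 := by
    funext i
    simp only [Pi.add_apply, hs, hsl]
    by_cases h : i ∈ l <;> simp [h]
  refine ⟨s, ⟨fun i hi => by simp [hs, hi], fun c hc => ?_⟩,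
    (g 0) • ind, sl, ?_, ?_, ?_⟩
  · refine hdown (hstab c hc) (fun i => ?_)
    simp only [Pi.add_apply, hs]
    by_cases h : i ∈ l <;> simp [h]
  · intro i hi
    simp [hind, hi]
  · intro i hi
    simp [hsl, hi]
  · rw [hssl]
    exact hdeg (g 0)

/-- subgroup of vectors supported on `l` -/
def Vlgrp (l : Set (Fin n)) : AddSubgroup (Fin n → ℤ) where
  carrier := {v | ∀ i ∉ l, v i = 0}
  add_mem' := by
    intro a b ha hb i hi
    simp only [Pi.add_apply, ha i hi, hb i hi, add_zero]
  zero_mem' := fun i _ => rfl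
  neg_mem' := by
    intro a ha i hi
    simp only [Pi.neg_apply, ha i hi, neg_zero]

def mulVecHom (M : Matrix (Fin d) (Fin n) ℤ) : (Fin n → ℤ) →+ (Fin d → ℤ) where
  toFun := M.mulVec
  map_zero' := Matrix.mulVec_zero M
  map_add' := fun a b => Matrix.mulVec_add M a b

lemma AZl_eq (M : Matrix (Fin d) (Fin n) ℤ) (l : Set (Fin n)) :
    AZl M l = AddSubgroup.map (mulVecHom M) (Vlgrp l) := by
  rw [AZl]
  have hset : {w | ∃ v : Fin n → ℤ, (∀ i ∉ l, v i = 0) ∧ w = M.mulVec v} =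
      ↑(AddSubgroup.map (mulVecHom M) (Vlgrp l)) := by
    ext w
    simp only [Set.mem_setOf_eq, AddSubgroup.coe_map, Set.mem_image, SetLike.mem_coe]
    constructor
    · rintro ⟨v, hv, rfl⟩
      exact ⟨v, hv, rfl⟩
    · rintro ⟨v, hv, rfl⟩
      exact ⟨v, hv, rfl⟩
  rw [hset, AddSubgroup.closure_eq]

lemma mem_AZl_iff {M : Matrix (Fin d) (Fin n) ℤ} {l : Set (Fin n)} {x : Fin d → ℤ} :
    x ∈ AZl M l ↔ ∃ v : Fin n → ℤ, (∀ i ∉ l, v i = 0) ∧ x = M.mulVec v := by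
  rw [AZl_eq]
  simp only [AddSubgroup.mem_map]
  constructor
  · rintro ⟨v, hv, rfl⟩
    exact ⟨v, hv, rfl⟩
  · rintro ⟨v, hv, rfl⟩
    exact ⟨v, hv, rfl⟩

lemma mk_shift {M : Matrix (Fin d) (Fin n) ℤ} {l : Set (Fin n)} (x : Fin d → ℤ)
    {c : Fin n → ℕ} (hc : cellm l c) :
    (QuotientAddGroup.mk (x + Am M c) : (Fin d → ℤ) ⧸ AZl M l) = QuotientAddGroup.mk x := by
  rw [QuotientAddGroup.eq_iff_sub_mem]
  have h1 : (x + Am M c) - x = Am M c := by abel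
  rw [h1]
  exact mem_AZl_iff.mpr ⟨vtoZ c, fun i hi => by simp [vtoZ, hc i hi], rfl⟩

end Stmt13Aux
/-- For a monomial A-graded ideal and (0, ℓ) ∈ B(T), the map
r ↦ A(r) mod A(ℤ^ℓ) is a bijection from {r | (r, ℓ) ∈ B(T)} onto A(ℤ^n)/A(ℤ^ℓ). -/
theorem stmt_13 {n d : ℕ} (M : Matrix (Fin d) (Fin n) ℤ)
    (hker : ∀ a : Fin n → ℕ, M.mulVec (vtoZ a) = 0 → a = 0)
    (I : Ideal (MvPolynomial (Fin n) ℂ)) (hmon : IsMonomialIdeal I)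
    (hI : IsAGraded M I) (l : Set (Fin n)) (hl : IsStdPair (TofI I) 0 l) :
    Set.InjOn (fun r : Fin n → ℕ =>
        (QuotientAddGroup.mk (M.mulVec (vtoZ r)) : (Fin d → ℤ) ⧸ AZl M l))
      {r | IsStdPair (TofI I) r l} ∧
    (fun r : Fin n → ℕ =>
        (QuotientAddGroup.mk (M.mulVec (vtoZ r)) : (Fin d → ℤ) ⧸ AZl M l)) ''
        {r | IsStdPair (TofI I) r l} =
      Set.range (fun v : Fin n → ℤ =>
        (QuotientAddGroup.mk (M.mulVec v) : (Fin d → ℤ) ⧸ AZl M l)) := by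
  classical
  have hdown : ∀ {a b : Fin n → ℕ}, a ∈ TofI I → (∀ i, b i ≤ a i) → b ∈ TofI I :=
    fun ha h => T_down ha h
  have huniq : ∀ {a b : Fin n → ℕ}, a ∈ TofI I → b ∈ TofI I → Am M a = Am M b → a = b :=
    fun ha hb h => T_unique hmon hI ha hb h
  have hexist : ∀ a : Fin n → ℕ, ∃ t ∈ TofI I, Am M t = Am M a := T_exists hI
  have hcell : ∀ c, cellm l c → c ∈ TofI I := fun _ hc => T_mem_of_cell hl hc
  constructor
  · intro r hr r' hr' heq
    simp only [Set.mem_setOf_eq] at hr hr'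
    rw [std_iff hl] at hr hr'
    have hsub : Am M r - Am M r' ∈ AZl M l := by
      rw [← QuotientAddGroup.eq_iff_sub_mem]
      exact heq
    obtain ⟨v, hv, hveq⟩ := mem_AZl_iff.mp hsub
    set vp : Fin n → ℕ := fun i => (v i).toNat with hvp
    set vm : Fin n → ℕ := fun i => (-(v i)).toNat with hvm
    have hvpc : cellm l vp := fun i hi => by simp [hvp, hv i hi]
    have hvmc : cellm l vm := fun i hi => by simp [hvm, hv i hi]
    have hsplit : vtoZ vp - vtoZ vm = v := by
      funext i
      simp only [Pi.sub_apply, vtoZ, hvp, hvm]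
      omega
    have hkey : Am M (r + vm) = Am M (r' + vp) := by
      rw [Am_add, Am_add]
      have h2 : Am M r - Am M r' = Am M vp - Am M vm := by
        rw [hveq, ← hsplit]
        show M.mulVec _ = _
        rw [Matrix.mulVec_sub]
        rfl
      have h3 := sub_eq_sub_iff_add_eq_add.mp h2
      rw [h3, add_comm]
    have heq2 := huniq (hr.2 vm hvmc) (hr'.2 vp hvpc) hkey
    funext i
    by_cases hi : i ∈ l
    · rw [hr.1 i hi, hr'.1 i hi]
    · have h3 := congrFun heq2 i
      simp only [Pi.add_apply] at h3
      have h4 : vp i = 0 := hvpc i hi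
      have h5 : vm i = 0 := hvmc i hi
      omega
  · set Tset : Set (Fin n → ℕ) :=
      {r | (∀ i ∈ l, r i = 0) ∧ ∀ c, cellm l c → r + c ∈ TofI I} with hTset
    have hC1 : ∀ a : Fin n → ℕ,
        (QuotientAddGroup.mk (Am M a) : (Fin d → ℤ) ⧸ AZl M l) ∈
          (fun s => (QuotientAddGroup.mk (Am M s) : (Fin d → ℤ) ⧸ AZl M l)) '' Tset := by
      intro a
      obtain ⟨s, hs, c, c', hc, hc', hdeg⟩ := classP (M := M) hdown huniq hexist hcell a
      refine ⟨s, hs, ?_⟩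
      have e1 : (QuotientAddGroup.mk (Am M s) : (Fin d → ℤ) ⧸ AZl M l)
          = QuotientAddGroup.mk (Am M (s + c')) := by
        rw [Am_add]
        exact (mk_shift (Am M s) hc').symm
      have e2 : (QuotientAddGroup.mk (Am M a) : (Fin d → ℤ) ⧸ AZl M l)
          = QuotientAddGroup.mk (Am M (a + c)) := by
        rw [Am_add]
        exact (mk_shift (Am M a) hc).symm
      show (QuotientAddGroup.mk (Am M s) : (Fin d → ℤ) ⧸ AZl M l)
        = QuotientAddGroup.mk (Am M a)
      rw [e1, e2, hdeg]
    set C := (fun s => (QuotientAddGroup.mk (Am M s) : (Fin d → ℤ) ⧸ AZl M l)) '' Tset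
      with hC
    have hCfin : C.Finite := Set.Finite.image _ (Tl_finite hl)
    have hsurj : ∀ b : Fin n → ℕ, ∀ q ∈ C,
        ∃ p ∈ C, p + QuotientAddGroup.mk (Am M b) = q := by
      intro b q hq
      set φ : ((Fin d → ℤ) ⧸ AZl M l) → ((Fin d → ℤ) ⧸ AZl M l) :=
        fun x => x + QuotientAddGroup.mk (Am M b) with hφ
      have himg : φ '' C ⊆ C := by
        rintro x ⟨y, ⟨s, hs, rfl⟩, rfl⟩
        have h7 : φ (QuotientAddGroup.mk (Am M s)) =
            QuotientAddGroup.mk (Am M (s + b)) := by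
          rw [Am_add, hφ]
          rfl
        rw [h7]
        exact hC1 (s + b)
      have hinj : Function.Injective φ := fun x y h => by
        simpa only [hφ, add_left_inj] using h
      have heqC : φ '' C = C :=
        Set.eq_of_subset_of_ncard_le himg
          (le_of_eq (Set.ncard_image_of_injective C hinj).symm) hCfin
      rw [← heqC] at hq
      obtain ⟨p, hp, hpe⟩ := hq
      exact ⟨p, hp, hpe⟩
    apply Set.ext
    intro q
    constructor
    · rintro ⟨r, _, rfl⟩
      exact ⟨vtoZ r, rfl⟩
    · rintro ⟨v, rfl⟩
      set vp : Fin n → ℕ := fun i => (v i).toNat with hvp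
      set vm : Fin n → ℕ := fun i => (-(v i)).toNat with hvm
      have hsplit : vtoZ vp - vtoZ vm = v := by
        funext i
        simp only [Pi.sub_apply, vtoZ, hvp, hvm]
        omega
      obtain ⟨p, hp, hpe⟩ := hsurj vm _ (hC1 vp)
      have hpv : p = QuotientAddGroup.mk (M.mulVec v) := by
        have h6 : (QuotientAddGroup.mk (Am M vp) : (Fin d → ℤ) ⧸ AZl M l)
            - QuotientAddGroup.mk (Am M vm) = QuotientAddGroup.mk (M.mulVec v) := by
          rw [← QuotientAddGroup.mk_sub]
          congr 1
          rw [← hsplit]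
          show Am M vp - Am M vm = _
          rw [Matrix.mulVec_sub]
          rfl
        rw [← h6, eq_sub_iff_add_eq]
        exact hpe
      obtain ⟨s, hs, hse⟩ := hp
      refine ⟨s, (std_iff hl s).mpr hs, ?_⟩
      show (QuotientAddGroup.mk (Am M s) : (Fin d → ℤ) ⧸ AZl M l)
        = QuotientAddGroup.mk (M.mulVec v)
      rw [← hpv, ← hse]
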